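/- arXiv:1706.02443 — 3 statements merged into one kernel-verified Lean document; each statement's English description precedes it below -/
import Mathlib

section
/- In the tensor product of abstract crystals, for every b2 ⊗ b1 and index i, f_i(b2 ⊗ b1) = b' if and only if e_i(b') = b2 ⊗ b1; that is, the tensor product crystal operators defined by the ε/φ comparison rule are mutually inverse partial bijections. -/
/-- Iterated application of a partially defined operator. -/
def optIter {B : Type} (g : B → Option B) : ℕ → B → Option B
  | 0, b => some b
  | k + 1, b => (g b).bind (optIter g k)

/-- An abstract `U_q(g)`-crystal: a set `B` with crystal operators `e i`, `f i`,
a weight function `wt` into the weight lattice `P`, and the pairing `pair i = ⟨h_i, ·⟩`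
with the simple coroots.  The statistics `eps` and `phi` are the string lengths
(`eps i b = max {k | e_i^k b ≠ 0}`, and similarly for `phi`), and the crystal axioms
`phi_eq` and `ef_iff` hold. -/
structure AbsCrystal (I P : Type) [AddCommGroup P] (pair : I → P →+ ℤ) : Type 1 where
  B : Type
  e : I → B → Option B
  f : I → B → Option B
  wt : B → P
  eps : I → B → ℕ
  phi : I → B → ℕ
  phi_eq : ∀ i b, (phi i b : ℤ) = (eps i b : ℤ) + pair i (wt b)
  ef_iff : ∀ i b b', f i b = some b' ↔ e i b' = some b
  eps_spec : ∀ i b k, optIter (e i) k b ≠ none ↔ k ≤ eps i b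
  phi_spec : ∀ i b k, optIter (f i) k b ≠ none ↔ k ≤ phi i b

variable {I P : Type} [AddCommGroup P] {pair : I → P →+ ℤ}

/-- Tensor product crystal operator `e_i` on `B2 ⊗ B1`:
`e_i(b2 ⊗ b1) = (e_i b2) ⊗ b1` if `ε_i(b2) > φ_i(b1)`, and `b2 ⊗ (e_i b1)` otherwise
(the result being `0 = none` whenever the indicated operator gives `0`). -/
def tensorE (C2 C1 : AbsCrystal I P pair) (i : I) (b : C2.B × C1.B) :
    Option (C2.B × C1.B) :=
  if C1.phi i b.2 < C2.eps i b.1 then (C2.e i b.1).map (fun x => (x, b.2))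
  else (C1.e i b.2).map (fun x => (b.1, x))

/-- Tensor product crystal operator `f_i` on `B2 ⊗ B1`:
`f_i(b2 ⊗ b1) = (f_i b2) ⊗ b1` if `ε_i(b2) ≥ φ_i(b1)`, and `b2 ⊗ (f_i b1)` otherwise. -/
def tensorF (C2 C1 : AbsCrystal I P pair) (i : I) (b : C2.B × C1.B) :
    Option (C2.B × C1.B) :=
  if C1.phi i b.2 ≤ C2.eps i b.1 then (C2.f i b.1).map (fun x => (x, b.2))
  else (C1.f i b.2).map (fun x => (b.1, x))


lemma phi_succ (C : AbsCrystal I P pair) (i : I) {b b' : C.B}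
    (h : C.f i b = some b') : C.phi i b = C.phi i b' + 1 := by
  have key : ∀ k, optIter (C.f i) (k + 1) b = optIter (C.f i) k b' := by
    intro k; simp [optIter, h]
  have h1 : ∀ k, k ≤ C.phi i b' ↔ k + 1 ≤ C.phi i b := by
    intro k
    rw [← C.phi_spec i b' k, ← C.phi_spec i b (k + 1), key]
  have ha := (h1 (C.phi i b')).mp le_rfl
  have hb := (h1 (C.phi i b - 1)).mpr (by omega)
  omega

lemma eps_succ (C : AbsCrystal I P pair) (i : I) {b b' : C.B}
    (h : C.e i b' = some b) : C.eps i b' = C.eps i b + 1 := by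
  have key : ∀ k, optIter (C.e i) (k + 1) b' = optIter (C.e i) k b := by
    intro k; simp [optIter, h]
  have h1 : ∀ k, k ≤ C.eps i b ↔ k + 1 ≤ C.eps i b' := by
    intro k
    rw [← C.eps_spec i b k, ← C.eps_spec i b' (k + 1), key]
  have ha := (h1 (C.eps i b)).mp le_rfl
  have hb := (h1 (C.eps i b' - 1)).mpr (by omega)
  omega

/-- on the tensor product of two abstract crystals,
`f_i(b2 ⊗ b1) = b'` if and only if `e_i(b') = b2 ⊗ b1`; i.e. the tensor product
crystal operators defined by the `ε/φ` comparison rule are mutually inverse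
partial bijections. -/
theorem tensor_f_eq_iff_e_eq (C2 C1 : AbsCrystal I P pair) (i : I)
    (b b' : C2.B × C1.B) :
    tensorF C2 C1 i b = some b' ↔ tensorE C2 C1 i b' = some b := by
  obtain ⟨b2, b1⟩ := b
  obtain ⟨b2', b1'⟩ := b'
  constructor
  · intro h
    unfold tensorF at h
    dsimp only at h
    split_ifs at h with hc
    · simp only [Option.map_eq_some_iff] at h
      obtain ⟨x2, hx2, hx⟩ := h
      cases hx
      have he : C2.e i b2' = some b2 := (C2.ef_iff i b2 b2').mp hx2
      have := eps_succ C2 i he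
      unfold tensorE
      rw [if_pos (by dsimp only; omega)]
      simp [he]
    · simp only [Option.map_eq_some_iff] at h
      obtain ⟨x1, hx1, hx⟩ := h
      cases hx
      have he : C1.e i b1' = some b1 := (C1.ef_iff i b1 b1').mp hx1
      have := phi_succ C1 i hx1
      unfold tensorE
      rw [if_neg (by dsimp only; omega)]
      simp [he]
  · intro h
    unfold tensorE at h
    dsimp only at h
    split_ifs at h with hc
    · simp only [Option.map_eq_some_iff] at h
      obtain ⟨x2, hx2, hx⟩ := h
      cases hx
      have hf : C2.f i b2 = some b2' := (C2.ef_iff i b2 b2').mpr hx2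
      have := eps_succ C2 i hx2
      unfold tensorF
      rw [if_pos (by dsimp only; omega)]
      simp [hf]
    · simp only [Option.map_eq_some_iff] at h
      obtain ⟨x1, hx1, hx⟩ := h
      cases hx
      have hf : C1.f i b1 = some b1' := (C1.ef_iff i b1 b1').mpr hx1
      have := phi_succ C1 i hf
      unfold tensorF
      rw [if_neg (by dsimp only; omega)]
      simp [hf]
end

section
/- Conservation laws for the soliton cellular automaton: the operators A_s on rigged configurations commute, A_s ∘ A_{s'} = A_{s'} ∘ A_s; hence (assuming A_s ∘ Φ^{-1} = Φ^{-1} ∘ T_s) the time evolutions commute, T_s ∘ T_{s'} = T_{s'} ∘ T_s. -/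
/-- The data of a rigged configuration relevant to the SCA using `B^{r,1}`:
the partition `ν^{(r)}` with its riggings, recorded as a multiset of pairs
(row length, rigging), together with the remaining data (the other partitions
and their riggings). -/
structure RC (Rest : Type) : Type where
  nuR : Multiset (ℕ × ℤ)
  rest : Rest

/-- The operator `A_s` on rigged configurations: add `min(i, s)` to every rigging
attached to a row of length `i` in `ν^{(r)}`, leaving everything else unchanged. -/
def timeEvA (s : ℕ) {Rest : Type} (rc : RC Rest) : RC Rest :=
  ⟨rc.nuR.map (fun p => (p.1, p.2 + min p.1 s)), rc.rest⟩

/-- conservation laws for the SCA.  The operators `A_s` on rigged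
configurations commute, `A_s ∘ A_{s'} = A_{s'} ∘ A_s`; hence, assuming the
intertwining `Φ⁻¹ ∘ T_s = A_s ∘ Φ⁻¹` (for both `s` and `s'`), the time evolutions
commute: `T_s ∘ T_{s'} = T_{s'} ∘ T_s`. -/
theorem conservation_laws {State Rest : Type} (s s' : ℕ)
    (Φ : RC Rest ≃ State) (T T' : State → State)
    (hT : ∀ b, Φ.symm (T b) = timeEvA s (Φ.symm b))
    (hT' : ∀ b, Φ.symm (T' b) = timeEvA s' (Φ.symm b)) :
    (∀ rc : RC Rest, timeEvA s (timeEvA s' rc) = timeEvA s' (timeEvA s rc)) ∧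
    (∀ b, T (T' b) = T' (T b)) := by
  have hA : ∀ rc : RC Rest, timeEvA s (timeEvA s' rc) = timeEvA s' (timeEvA s rc) := by
    intro rc
    simp only [timeEvA, Multiset.map_map, Function.comp]
    congr 1
    apply Multiset.map_congr rfl
    intro p _
    ring
  refine ⟨hA, fun b => ?_⟩
  apply Φ.symm.injective
  rw [hT, hT', hT', hT, hA]
end

section
/- Phase shift formula: assume 𝓕^{(r)}(ℓ) ≅ B(ℓϖ) as U_q(g_{0,r})-crystals, so every node r' adjacent to r has equal Cartan entry A_{rr'}. For a two-soliton state with solitons s₁, s₂ of lengths ℓ₁ < ℓ₂, the phase shift equals δ = 2ℓ₁ + A_{rr'}·H(Ψ(s₁) ⊗ Ψ(s₂)), where H(Ψ(s₁) ⊗ Ψ(s₂)) = Σ_{r'∼r} |ν^{(r')}| and the phase shift is computed as δ = j − P_{ℓ₂}^{(r)} − ℓ₂ with P_{ℓ₂}^{(r)} = −2(ℓ₁+ℓ₂) + Σ_{r'∼r} A_{rr'}|ν^{(r')}|. -/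
private lemma phase_shift_aux (s : Multiset ℕ) (ℓ₂ : ℕ) (h : ∀ x ∈ s, x ≤ ℓ₂) :
    (s.map (fun m => ((min ℓ₂ m : ℕ) : ℤ))).sum = (s.map (fun m => (m : ℤ))).sum := by
  have h2 : (s.map (fun m => (m : ℤ))) = Multiset.map Nat.cast s := by
    rw [Multiset.map_id']
    show Multiset.bind s (fun a => {(a : ℤ)}) = _
    rw [Multiset.bind_singleton]
  rw [h2]
  congr 1
  exact Multiset.map_congr rfl (fun x hx => by rw [min_eq_right (h x hx)])

/-- the phase shift formula.  Assume `𝓑^{(r)}(ℓ) ≅ B(ℓϖ)`, so all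
nodes `r'` adjacent to `r` have the same Cartan entry `A_{rr'} = a` (`hA`).  The
rigged configuration of the two-soliton state has `ν^{(r)} = (ℓ₁, ℓ₂)` with
`ℓ₁ < ℓ₂`, and the rows of `ν^{(r')}` for `r' ∼ r` have length at most `ℓ₂`.  The
modified vacancy number is `P_{ℓ₂}^{(r)} = −Σ_b A_{rb} Σ_{k ∈ ν^{(b)}} min(ℓ₂, k)`
(no tensor-factor contribution), the rigging of the long row is `j = −ℓ₂`, the
position of the larger soliton after `k` time evolutions is `j + kℓ₂ − P_{ℓ₂}^{(r)}`,
and without interaction it would be `ℓ₂ + kℓ₂`.  The decoupled local energy is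
`H(Ψ(s₁) ⊗ Ψ(s₂)) = Σ_{r' ∼ r} |ν^{(r')}|`.  Conclusion: the phase shift equals
`δ = 2ℓ₁ + A_{rr'}·H(Ψ(s₁) ⊗ Ψ(s₂))`. -/
theorem phase_shift_formula {I0 : Type} [Fintype I0] [DecidableEq I0]
    (r : I0) (Nb : Finset I0) (hrNb : r ∉ Nb)
    (A : I0 → I0 → ℤ) (hArr : A r r = 2)
    (a : ℤ) (hA : ∀ r' ∈ Nb, A r r' = a)
    (hA0 : ∀ b : I0, b ≠ r → b ∉ Nb → A r b = 0)
    (nu : I0 → Multiset ℕ) (ℓ₁ ℓ₂ : ℕ) (h12 : ℓ₁ < ℓ₂)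
    (hnur : nu r = {ℓ₁, ℓ₂})
    (hsmall : ∀ r' ∈ Nb, ∀ k ∈ nu r', k ≤ ℓ₂)
    (k : ℕ) :
    (((-(ℓ₂ : ℤ)) + (k : ℤ) * ℓ₂
        - (-(∑ b : I0, A r b * ((nu b).map (fun m => ((min ℓ₂ m : ℕ) : ℤ))).sum)))
      - ((ℓ₂ : ℤ) + (k : ℤ) * ℓ₂))
    = 2 * (ℓ₁ : ℤ) + a * (∑ r' ∈ Nb, ((nu r').map (fun m => (m : ℤ))).sum) := by
  have hsplit :
      (∑ b : I0, A r b * ((nu b).map (fun m => ((min ℓ₂ m : ℕ) : ℤ))).sum)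
        = A r r * ((nu r).map (fun m => ((min ℓ₂ m : ℕ) : ℤ))).sum
          + ∑ b ∈ Finset.univ.erase r,
              A r b * ((nu b).map (fun m => ((min ℓ₂ m : ℕ) : ℤ))).sum := by
    rw [← Finset.add_sum_erase _ _ (Finset.mem_univ r)]
  have hrest :
      (∑ b ∈ Finset.univ.erase r,
          A r b * ((nu b).map (fun m => ((min ℓ₂ m : ℕ) : ℤ))).sum)
        = ∑ r' ∈ Nb, a * ((nu r').map (fun m => (m : ℤ))).sum := by
    rw [← Finset.sum_subset (s₁ := Nb) (s₂ := Finset.univ.erase r)]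
    · exact Finset.sum_congr rfl fun b hb => by
        rw [hA b hb, phase_shift_aux (nu b) ℓ₂ (hsmall b hb)]
    · intro b hb
      exact Finset.mem_erase.mpr ⟨fun h => hrNb (h ▸ hb), Finset.mem_univ b⟩
    · intro b hb hnb
      rw [hA0 b (Finset.mem_erase.mp hb).1 hnb, zero_mul]
  have hr : ((nu r).map (fun m => ((min ℓ₂ m : ℕ) : ℤ))).sum = (ℓ₁ : ℤ) + ℓ₂ := by
    rw [hnur]
    simp [min_eq_right h12.le, min_self]
    omega
  rw [hsplit, hrest, hArr, hr, Finset.mul_sum]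
  ring
end
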